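/- arXiv:1610.02323 — 2 statements merged into one kernel-verified Lean document; each statement's English description precedes it below -/
import Mathlib

section
/- Let γ be a class K∞ function, and let s > 0 with γ(s) < s. Define M̲ = lim_{n→∞} γⁿ(s). Then γ(r) < r for all r ∈ (M̲, s], i.e., the small-gain condition holds on the interval (M̲, s]. -/
open Filter Set Topology NNReal

def ClassKInf (f : ℝ≥0 → ℝ≥0) : Prop :=
  Continuous f ∧ StrictMono f ∧ Tendsto f atTop atTop ∧ f 0 = 0

theorem stmt6 (γ : ℝ≥0 → ℝ≥0) (hK : ClassKInf γ)
    (s : ℝ≥0) (hs : 0 < s) (hlt : γ s < s)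
    (M : ℝ≥0) (hM : Tendsto (fun n : ℕ => γ^[n] s) atTop (nhds M)) :
    ∀ r ∈ Set.Ioc M s, γ r < r := by
  obtain ⟨-, hmono, -, -⟩ := hK
  rintro r ⟨hMr, hrs⟩
  by_contra h
  push_neg at h
  have hit : ∀ n, r ≤ γ^[n] r := by
    intro n
    induction n with
    | zero => simp
    | succ n ih =>
      rw [Function.iterate_succ_apply']
      exact le_trans h (hmono.monotone ih)
  have hle : ∀ n, r ≤ γ^[n] s := fun n =>
    le_trans (hit n) (hmono.monotone.iterate n hrs)
  exact absurd (ge_of_tendsto' hM hle) (not_le.mpr hMr)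
end

section
/- Let γ be a class K∞ function, Δ > 0, and suppose γ has only finitely many fixed points in (0,∞). Then the iterative algorithm that, starting from s=0, repeatedly sets s* = s + Δ and (i) if γ(s*) = s* replaces s by s*, (ii) if γ(s*) < s* computes M̲ = lim γⁿ(s*) and M̄ = lim (γ⁻¹)ⁿ(s*) and replaces s by M̄ (stopping if M̄ = ∞), (iii) if γ(s*) > s* computes M* = lim γⁿ(s*) and replaces s by M* (stopping if the iterates are unbounded), terminates after finitely many iterations. -/
open Filter Set Topology NNReal

/-- One step of the algorithm: from current value `s`, with `s* = s + Δ`,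
the next value `s'` is obtained by case (i), (ii) or (iii);
in cases (ii) and (iii) a finite limit exists (otherwise the algorithm stops). -/
def AlgStep (γ γinv : ℝ≥0 → ℝ≥0) (Δ s s' : ℝ≥0) : Prop :=
  (γ (s + Δ) = s + Δ ∧ s' = s + Δ) ∨
  (γ (s + Δ) < s + Δ ∧
    Tendsto (fun m : ℕ => γinv^[m] (s + Δ)) atTop (nhds s')) ∨
  (s + Δ < γ (s + Δ) ∧
    Tendsto (fun m : ℕ => γ^[m] (s + Δ)) atTop (nhds s'))

/-- Termination: there is no infinite run of the algorithm starting from `0`. -/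
theorem stmt18 (γ γinv : ℝ≥0 → ℝ≥0) (hK : ClassKInf γ)
    (hinv : Function.LeftInverse γinv γ ∧ Function.RightInverse γinv γ)
    (Δ : ℝ≥0) (hΔ : 0 < Δ)
    (hfin : {s : ℝ≥0 | 0 < s ∧ γ s = s}.Finite) :
    ¬ ∃ seq : ℕ → ℝ≥0, seq 0 = 0 ∧ ∀ n : ℕ, AlgStep γ γinv Δ (seq n) (seq (n + 1)) := by
  obtain ⟨hcont, hmono, -, -⟩ := hK
  rintro ⟨seq, h0, hstep⟩
  have hinv2 : ∀ x, γ (γinv x) = x := hinv.2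
  have hinvmono : StrictMono γinv := fun a b hab =>
    hmono.lt_iff_lt.mp (by rw [hinv2, hinv2]; exact hab)
  -- each new value is a fixed point of γ and increases by at least Δ
  have key : ∀ n, γ (seq (n + 1)) = seq (n + 1) ∧ seq n + Δ ≤ seq (n + 1) := by
    intro n
    rcases hstep n with ⟨hfix, heq⟩ | ⟨hlt, hlim⟩ | ⟨hgt, hlim⟩
    · rw [heq]; exact ⟨hfix, le_refl _⟩
    · set t := seq n + Δ with ht
      have h1 : t < γinv t := by
        have := hinvmono hlt
        rwa [hinv.1] at this
      have hge : ∀ m, t ≤ γinv^[m] t := by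
        intro m; induction m with
        | zero => simp
        | succ m ih =>
          rw [Function.iterate_succ_apply']
          calc t ≤ γinv t := h1.le
            _ ≤ γinv (γinv^[m] t) := hinvmono.monotone ih
      have hle : t ≤ seq (n + 1) := ge_of_tendsto hlim (Eventually.of_forall hge)
      have hfp : γ (seq (n + 1)) = seq (n + 1) := by
        have hA : Tendsto (fun m => γ (γinv^[m + 1] t)) atTop (nhds (γ (seq (n + 1)))) :=
          (hcont.tendsto _).comp (hlim.comp (tendsto_add_atTop_nat 1))
        have hB : (fun m => γ (γinv^[m + 1] t)) = fun m => γinv^[m] t := by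
          funext m; rw [Function.iterate_succ_apply', hinv2]
        rw [hB] at hA
        exact tendsto_nhds_unique hA hlim
      exact ⟨hfp, hle⟩
    · set t := seq n + Δ with ht
      have hge : ∀ m, t ≤ γ^[m] t := by
        intro m; induction m with
        | zero => simp
        | succ m ih =>
          rw [Function.iterate_succ_apply']
          calc t ≤ γ t := hgt.le
            _ ≤ γ (γ^[m] t) := hmono.monotone ih
      have hle : t ≤ seq (n + 1) := ge_of_tendsto hlim (Eventually.of_forall hge)
      have hfp : γ (seq (n + 1)) = seq (n + 1) := by
        have hA : Tendsto (fun m => γ (γ^[m] t)) atTop (nhds (γ (seq (n + 1)))) :=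
          (hcont.tendsto _).comp hlim
        have hB : (fun m => γ (γ^[m] t)) = fun m => γ^[m + 1] t := by
          funext m; rw [Function.iterate_succ_apply']
        rw [hB] at hA
        exact tendsto_nhds_unique hA (hlim.comp (tendsto_add_atTop_nat 1))
      exact ⟨hfp, hle⟩
  -- growth: seq n ≥ n * Δ
  have hgrow : ∀ n : ℕ, (n : ℝ≥0) * Δ ≤ seq n := by
    intro n; induction n with
    | zero => simp [h0]
    | succ n ih =>
      have h2 := (key n).2
      push_cast
      calc ((n : ℝ≥0) + 1) * Δ = (n : ℝ≥0) * Δ + Δ := by ring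
        _ ≤ seq n + Δ := by gcongr
        _ ≤ seq (n + 1) := h2
  -- membership in the finite fixed point set
  have hmem : ∀ n, seq (n + 1) ∈ {s : ℝ≥0 | 0 < s ∧ γ s = s} := by
    intro n
    refine ⟨?_, (key n).1⟩
    have : Δ ≤ seq (n + 1) := le_trans (le_add_self) (key n).2
    exact lt_of_lt_of_le hΔ this
  obtain ⟨B, hB⟩ := hfin.bddAbove
  obtain ⟨n, hn⟩ := exists_nat_gt (B / Δ)
  have hBn : B < (n : ℝ≥0) * Δ := by
    rwa [div_lt_iff₀ hΔ] at hn
  have h1 : (n : ℝ≥0) * Δ ≤ ((n : ℝ≥0) + 1) * Δ := by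
    gcongr; exact le_add_self.trans (by rw [add_comm])
  have h2 : ((n : ℝ≥0) + 1) * Δ ≤ seq (n + 1) := by
    have := hgrow (n + 1); push_cast at this; exact this
  have h3 : seq (n + 1) ≤ B := hB (hmem n)
  exact absurd (hBn.trans_le (h1.trans (h2.trans h3))) (lt_irrefl B)
end
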